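/- Let τ > 0, let E : ℕ → ℝ be a monotone nondecreasing sequence with E i ≥ 0 for all i and E i → ∞ as i → ∞, and let Ebd > 0. Then for every ε > 0 there exists an integer n > 0 such that for every α : ℕ → ℂ with ∑'_i ‖α i‖² = 1 and with (fun i => E i · ‖α i‖²) summable and ∑'_i E i · ‖α i‖² ≤ Ebd, one has ∑'_i ‖α i‖² · ‖exp(−i·(E i)·τ·n) − 1‖² < ε², where i in the exponent denotes the imaginary unit. -/

import Mathlib

/-!
Expand the recurrence defect in the energy basis. Finitely many phases `exp (-i E_k τ n)` can be
brought simultaneously within `ε / 2` of `1` by a single `n > 0`: the powers of a point of the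
compact torus accumulate, and two close powers differ by a power close to `1`. The remaining
levels have energy at least `M`, so by Markov's inequality they carry weight at most `Ebd / M`,
and there the defect is at most `4`. With `M = 8 Ebd / ε²` the total is at most `3 ε² / 4`.
-/

open Filter

theorem IsCompact.exists_lt_dist_lt {X : Type*} [PseudoMetricSpace X] {s : Set X}
    (hs : IsCompact s) {u : ℕ → X} (hu : ∀ n, u n ∈ s) {δ : ℝ} (hδ : 0 < δ) :
    ∃ a b, a < b ∧ dist (u a) (u b) < δ := by
  obtain ⟨x, -, φ, hφ, hlim⟩ := hs.tendsto_subseq hu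
  obtain ⟨N, hN⟩ := Metric.cauchySeq_iff'.1 hlim.cauchySeq δ hδ
  exact ⟨φ N, φ (N + 1), hφ N.lt_succ_self, by rw [dist_comm]; exact hN (N + 1) N.le_succ⟩

theorem exists_pos_forall_norm_pow_sub_one_lt {ι : Type*} [Fintype ι] {z : ι → ℂ}
    (hz : ∀ i, ‖z i‖ = 1) {δ : ℝ} (hδ : 0 < δ) :
    ∃ n : ℕ, 0 < n ∧ ∀ i, ‖z i ^ n - 1‖ < δ := by
  have hmem : ∀ m : ℕ, (fun i => z i ^ m) ∈ Metric.closedBall (0 : ι → ℂ) 1 := fun m => by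
    simp [pi_norm_le_iff_of_nonneg, norm_pow, hz]
  obtain ⟨a, b, hab, hclose⟩ := (isCompact_closedBall _ _).exists_lt_dist_lt hmem hδ
  refine ⟨b - a, Nat.sub_pos_of_lt hab, fun i => ?_⟩
  calc ‖z i ^ (b - a) - 1‖ = ‖z i ^ a * (z i ^ (b - a) - 1)‖ := by simp [norm_pow, hz]
    _ = dist (z i ^ a) (z i ^ b) := by
      rw [mul_sub, mul_one, pow_mul_pow_sub _ hab.le, dist_comm, dist_eq_norm]
    _ ≤ dist (fun i => z i ^ a) (fun i => z i ^ b) := dist_le_pi_dist (fun i => z i ^ a) (fun i => z i ^ b) i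
    _ < δ := hclose

theorem tsum_mul_le_of_le_add_mul {ι : Type*} {p f E : ι → ℝ} (hp : ∀ i, 0 ≤ p i)
    (hf : ∀ i, 0 ≤ f i) (hps : Summable p) (hEp : Summable fun i => E i * p i) {a b : ℝ}
    (hfab : ∀ i, f i ≤ a + b * E i) :
    ∑' i, p i * f i ≤ a * ∑' i, p i + b * ∑' i, E i * p i := by
  have hbound : ∀ i, p i * f i ≤ a * p i + b * (E i * p i) := fun i => by
    nlinarith [mul_le_mul_of_nonneg_left (hfab i) (hp i)]
  have hsum : Summable fun i => a * p i + b * (E i * p i) :=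
    (hps.mul_left a).add (hEp.mul_left b)
  calc ∑' i, p i * f i ≤ ∑' i, (a * p i + b * (E i * p i)) :=
        (hsum.of_nonneg_of_le (fun i => mul_nonneg (hp i) (hf i)) hbound).tsum_le_tsum hbound hsum
    _ = a * ∑' i, p i + b * ∑' i, E i * p i := by
      rw [(hps.mul_left a).tsum_add (hEp.mul_left b), tsum_mul_left, tsum_mul_left]

theorem tsum_mul_le_of_energy_cutoff {p f E : ℕ → ℝ} {N : ℕ} {η C M : ℝ} (hη : 0 ≤ η)
    (hp : ∀ i, 0 ≤ p i) (hps : Summable p) (hE : ∀ i, 0 ≤ E i) (hEp : Summable fun i => E i * p i) (hM : 0 < M)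
    (hEM : ∀ i, N ≤ i → M ≤ E i) (hf : ∀ i, 0 ≤ f i) (hfC : ∀ i, f i ≤ C)
    (hfη : ∀ i < N, f i ≤ η) :
    ∑' i, p i * f i ≤ η * ∑' i, p i + C / M * ∑' i, E i * p i := by
  refine tsum_mul_le_of_le_add_mul hp hf hps hEp fun i => ?_
  have hC : 0 ≤ C := (hf i).trans (hfC i)
  rcases lt_or_ge i N with hi | hi
  · have : 0 ≤ C / M * E i := mul_nonneg (div_nonneg hC hM.le) (hE i)
    linarith [hfη i hi]
  · have : C ≤ C / M * E i := calc
      C = C / M * M := (div_mul_cancel₀ C hM.ne').symm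
      _ ≤ C / M * E i := by gcongr; exact hEM i hi
    linarith [hfC i]

theorem norm_sub_one_le_two {z : ℂ} (hz : ‖z‖ = 1) : ‖z - 1‖ ≤ 2 := by
  linarith [norm_sub_le z 1, norm_one (α := ℂ)]

theorem quantum_uniform_recurrence_general (τ : ℝ) (E : ℕ → ℝ)
    (hE0 : ∀ i, 0 ≤ E i) (hEtop : Filter.Tendsto E Filter.atTop Filter.atTop)
    (Ebd : ℝ) (hEbd : 0 < Ebd) (ε : ℝ) (hε : 0 < ε) :
    ∃ n : ℕ, 0 < n ∧
      ∀ α : ℕ → ℂ, (∑' i, ‖α i‖ ^ 2 = 1) →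
        Summable (fun i => E i * ‖α i‖ ^ 2) →
        (∑' i, E i * ‖α i‖ ^ 2) ≤ Ebd →
        ∑' i, ‖α i‖ ^ 2 * ‖Complex.exp (-Complex.I * (E i) * τ * n) - 1‖ ^ 2 < ε ^ 2 := by
  set z : ℕ → ℂ := fun i => Complex.exp (-Complex.I * E i * τ)
  have hz : ∀ i, ‖z i‖ = 1 := fun i => by simp [z, Complex.norm_exp]
  have hM : 0 < 8 * Ebd / ε ^ 2 := by positivity
  obtain ⟨N, hN⟩ := eventually_atTop.1 (hEtop.eventually_ge_atTop (8 * Ebd / ε ^ 2))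
  obtain ⟨n, hn, hrec⟩ :=
    exists_pos_forall_norm_pow_sub_one_lt (fun i : Fin N => hz i) (half_pos hε)
  refine ⟨n, hn, fun α hα hEα hαEbd => ?_⟩
  have hαs : Summable fun i => ‖α i‖ ^ 2 := by
    by_contra h
    simp [tsum_eq_zero_of_not_summable h] at hα
  have hphase : ∀ i, Complex.exp (-Complex.I * E i * τ * n) = z i ^ n := fun i => by
    rw [← Complex.exp_nat_mul, mul_comm]
  simp only [hphase]
  have hlow : ∀ i < N, ‖z i ^ n - 1‖ ^ 2 ≤ (ε / 2) ^ 2 := fun i hi =>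
    pow_le_pow_left₀ (norm_nonneg _) (hrec ⟨i, hi⟩).le 2
  have hall : ∀ i, ‖z i ^ n - 1‖ ^ 2 ≤ 2 ^ 2 := fun i =>
    pow_le_pow_left₀ (norm_nonneg _) (norm_sub_one_le_two (by rw [norm_pow, hz, one_pow])) 2
  calc _ ≤ (ε / 2) ^ 2 * ∑' i, ‖α i‖ ^ 2 + 2 ^ 2 / (8 * Ebd / ε ^ 2) * ∑' i, E i * ‖α i‖ ^ 2 :=
        tsum_mul_le_of_energy_cutoff (by positivity) (fun i => by positivity) hαs hE0 hEα hM hN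
          (fun i => by positivity) hall hlow
    _ ≤ (ε / 2) ^ 2 * 1 + 2 ^ 2 / (8 * Ebd / ε ^ 2) * Ebd := by rw [hα]; gcongr
    _ = 3 / 4 * ε ^ 2 := by field_simp; ring
    _ < ε ^ 2 := by nlinarith

/-- **Quantum recurrence theorem, part (ii): uniform recurrence at bounded energy.**
With nondecreasing nonnegative eigenvalues `E i → ∞`, for every `ε > 0` there is a
single `n > 0` such that every unit state whose expected energy is at most `Ebd`
returns within `ε` of itself after time `n·τ`. -/
theorem quantum_uniform_recurrence (τ : ℝ) (hτ : 0 < τ) (E : ℕ → ℝ) (hE : Monotone E)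
    (hE0 : ∀ i, 0 ≤ E i) (hEtop : Filter.Tendsto E Filter.atTop Filter.atTop)
    (Ebd : ℝ) (hEbd : 0 < Ebd) (ε : ℝ) (hε : 0 < ε) :
    ∃ n : ℕ, 0 < n ∧
      ∀ α : ℕ → ℂ, (∑' i, ‖α i‖ ^ 2 = 1) →
        Summable (fun i => E i * ‖α i‖ ^ 2) →
        (∑' i, E i * ‖α i‖ ^ 2) ≤ Ebd →
        ∑' i, ‖α i‖ ^ 2 * ‖Complex.exp (-Complex.I * (E i) * τ * n) - 1‖ ^ 2 < ε ^ 2 :=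
  quantum_uniform_recurrence_general τ E hE0 hEtop Ebd hEbd ε hε
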